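/- Let a : ℝ³ → ℝ be C¹ and ζ : ℝ³ → ℝ³ be C¹, and let n = grad d be a C¹ unit vector field near x with div n = −2/Rₘ. Then a·div ζ = a·(nᵀ(Dζ)n) − (2a/Rₘ)(nᵀζ) − (grad_tg a)ᵀ ζ + nᵀ curl(a n × ζ), where grad_tg a = (I − n nᵀ) grad a is the tangential gradient. -/

import Mathlib

open Matrix

noncomputable def grad3 (d : (Fin 3 → ℝ) → ℝ) (x : Fin 3 → ℝ) : Fin 3 → ℝ :=
  fun i => fderiv ℝ d x (Pi.single i 1)

noncomputable def jac (v : (Fin 3 → ℝ) → (Fin 3 → ℝ)) (x : Fin 3 → ℝ) :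
    Matrix (Fin 3) (Fin 3) ℝ :=
  fun i j => fderiv ℝ v x (Pi.single j 1) i

noncomputable def div3 (v : (Fin 3 → ℝ) → (Fin 3 → ℝ)) (x : Fin 3 → ℝ) : ℝ :=
  ∑ i, jac v x i i

noncomputable def curl3 (v : (Fin 3 → ℝ) → (Fin 3 → ℝ)) (x : Fin 3 → ℝ) :
    Fin 3 → ℝ :=
  ![jac v x 2 1 - jac v x 1 2, jac v x 0 2 - jac v x 2 0, jac v x 1 0 - jac v x 0 1]

/-- Tangential gradient of a scalar field a relative to the unit field n:
(I − n nᵀ) grad a. -/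
noncomputable def gradTg (a : (Fin 3 → ℝ) → ℝ) (n : (Fin 3 → ℝ) → (Fin 3 → ℝ))
    (x : Fin 3 → ℝ) : Fin 3 → ℝ :=
  (1 - vecMulVec (n x) (n x)).mulVec (grad3 a x)

/-! Expand `curl (u × v) = (div v) u - (div u) v + (Du) v - (Dv) u` with `u = a n`, `v = ζ`, and
take the normal component. Since `|n| = 1` near `x`, differentiating `n ⬝ n = 1` gives
`nᵀ (Dn) = 0`, so `n ⬝ (D(a n)) ζ = ∇a ⬝ ζ`, while `div (a n) = ∇a ⬝ n - 2a/Rₘ`; the two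
`∇a` terms combine into `(grad_tg a) ⬝ ζ`. -/

open Topology

section Calculus

variable {𝕜 E : Type*} [NontriviallyNormedField 𝕜] [CompleteSpace 𝕜]
  [NormedAddCommGroup E] [NormedSpace 𝕜 E] {u v : E → Fin 3 → 𝕜} {x : E}

theorem fderiv_cross_apply (hu : DifferentiableAt 𝕜 u x) (hv : DifferentiableAt 𝕜 v x) (h : E) :
    fderiv 𝕜 (fun y => u y ⨯₃ v y) x h = fderiv 𝕜 u x h ⨯₃ v x + u x ⨯₃ fderiv 𝕜 v x h := by
  have := (crossProduct (R := 𝕜)).toContinuousBilinearMap.fderiv_of_bilinear hu hv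
  simp only [LinearMap.toContinuousBilinearMap_apply] at this
  simp [this, add_comm]

theorem fderiv_dotProduct_apply (hu : DifferentiableAt 𝕜 u x) (hv : DifferentiableAt 𝕜 v x)
    (h : E) :
    fderiv 𝕜 (fun y => u y ⬝ᵥ v y) x h = fderiv 𝕜 u x h ⬝ᵥ v x + u x ⬝ᵥ fderiv 𝕜 v x h := by
  have := (dotProductBilin 𝕜 𝕜 (m := Fin 3)).toContinuousBilinearMap.fderiv_of_bilinear hu hv
  simp only [LinearMap.toContinuousBilinearMap_apply, dotProductBilin_apply_apply] at this
  simp [this, add_comm]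

end Calculus

section VectorCalculus

variable {a : (Fin 3 → ℝ) → ℝ} {u v : (Fin 3 → ℝ) → (Fin 3 → ℝ)} {x : Fin 3 → ℝ}

theorem jac_transpose_apply (j : Fin 3) : (jac v x)ᵀ j = fderiv ℝ v x (Pi.single j 1) := rfl

theorem jac_cross_apply (hu : DifferentiableAt ℝ u x) (hv : DifferentiableAt ℝ v x) (i j : Fin 3) :
    jac (fun y => u y ⨯₃ v y) x i j = ((jac u x)ᵀ j ⨯₃ v x + u x ⨯₃ (jac v x)ᵀ j) i := by
  simp only [jac_transpose_apply, ← fderiv_cross_apply hu hv]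
  rfl

theorem curl3_cross (hu : DifferentiableAt ℝ u x) (hv : DifferentiableAt ℝ v x) :
    curl3 (fun y => u y ⨯₃ v y) x =
      div3 v x • u x - div3 u x • v x + jac u x *ᵥ v x - jac v x *ᵥ u x := by
  ext i
  fin_cases i <;>
  · simp only [curl3, jac_cross_apply hu hv]
    simp only [Fin.isValue, cross_apply, Nat.succ_eq_add_one, Nat.reduceAdd, transpose_apply,
      Pi.add_apply, cons_val, cons_val_one, cons_val_zero, Fin.zero_eta, Fin.mk_one, Fin.reduceFinMk,
      div3, Fin.sum_univ_three, Pi.sub_apply, Pi.smul_apply, smul_eq_mul, mulVec, dotProduct]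
    ring

theorem jac_smul (ha : DifferentiableAt ℝ a x) (hv : DifferentiableAt ℝ v x) :
    jac (fun y => a y • v y) x = vecMulVec (v x) (grad3 a x) + a x • jac v x := by
  ext i j
  simp only [jac, grad3, fderiv_fun_smul ha hv, _root_.add_apply,
    _root_.smul_apply, ContinuousLinearMap.smulRight_apply, Pi.add_apply,
    Pi.smul_apply, smul_eq_mul, Matrix.add_apply, vecMulVec_apply, Matrix.smul_apply]
  ring

theorem div3_smul (ha : DifferentiableAt ℝ a x) (hv : DifferentiableAt ℝ v x) :
    div3 (fun y => a y • v y) x = grad3 a x ⬝ᵥ v x + a x * div3 v x := by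
  simp [div3, jac_smul ha hv, vecMulVec_apply, dotProduct, Finset.sum_add_distrib,
    Finset.mul_sum, mul_comm]

theorem vecMul_jac_self_eq_zero_of_eventually_unit (hv : DifferentiableAt ℝ v x)
    (hunit : ∀ᶠ y in 𝓝 x, v y ⬝ᵥ v y = 1) : v x ᵥ* jac v x = 0 := by
  ext j
  have hconst : fderiv ℝ (fun y => v y ⬝ᵥ v y) x (Pi.single j 1) = 0 := by
    have hunit' : (fun y => v y ⬝ᵥ v y) =ᶠ[𝓝 x] fun _ => 1 := hunit
    simp [hunit'.fderiv_eq]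
  rw [fderiv_dotProduct_apply hv hv, dotProduct_comm, ← two_mul] at hconst
  simpa [vecMul, dotProduct, jac] using hconst

theorem gradTg_dotProduct (n : (Fin 3 → ℝ) → (Fin 3 → ℝ)) (w : Fin 3 → ℝ) :
    gradTg a n x ⬝ᵥ w = grad3 a x ⬝ᵥ w - (grad3 a x ⬝ᵥ n x) * (n x ⬝ᵥ w) := by
  simp [gradTg, sub_mulVec, vecMulVec_mulVec, sub_dotProduct, dotProduct_comm (n x), mul_comm]

end VectorCalculus

theorem surface_divergence_lemma_general
    (a : (Fin 3 → ℝ) → ℝ) (ha : ContDiff ℝ 1 a)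
    (ζ n : (Fin 3 → ℝ) → (Fin 3 → ℝ)) (hζ : ContDiff ℝ 1 ζ)
    (hn : ContDiff ℝ 1 n)
    (x : Fin 3 → ℝ) (U : Set (Fin 3 → ℝ)) (hU : IsOpen U) (hxU : x ∈ U)
    (hunit : ∀ y ∈ U, ∑ i, (n y i) ^ 2 = 1)
    (Rm : ℝ) (hdiv : div3 n x = -2 / Rm) :
    a x * div3 ζ x =
      a x * ∑ i, n x i * (jac ζ x).mulVec (n x) i
        - (2 * a x / Rm) * ∑ i, n x i * ζ x i
        - ∑ i, gradTg a n x i * ζ x i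
        + ∑ i, n x i * curl3 (fun y => crossProduct (a y • n y) (ζ y)) x i := by
  have ha' := ha.differentiable one_ne_zero x
  have hζ' := hζ.differentiable one_ne_zero x
  have hn' := hn.differentiable one_ne_zero x
  have hunit' : ∀ᶠ y in 𝓝 x, n y ⬝ᵥ n y = 1 :=
    Filter.eventually_of_mem (hU.mem_nhds hxU) fun y hy => by
      simpa [dotProduct, sq] using hunit y hy
  have hnn : n x ⬝ᵥ n x = 1 := hunit'.self_of_nhds
  have htan := vecMul_jac_self_eq_zero_of_eventually_unit hn' hunit'
  change a x * div3 ζ x = a x * (n x ⬝ᵥ jac ζ x *ᵥ n x) - 2 * a x / Rm * (n x ⬝ᵥ ζ x)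
    - gradTg a n x ⬝ᵥ ζ x + n x ⬝ᵥ curl3 (fun y => (a y • n y) ⨯₃ ζ y) x
  rw [curl3_cross (u := fun y => a y • n y) (ha'.smul hn') hζ', jac_smul ha' hn',
    div3_smul ha' hn', hdiv, gradTg_dotProduct]
  simp only [dotProduct_add, dotProduct_sub, dotProduct_smul, add_mulVec, vecMulVec_mulVec,
    smul_mulVec, mulVec_smul, dotProduct_mulVec (n x), htan, zero_dotProduct, hnn, smul_eq_mul,
    op_smul_eq_mul]
  ring

/-- Lemma (A1):  a div ζ = a nᵀ(Dζ)n − (2a/Rₘ) nᵀζ − (grad_tg a)ᵀζ + nᵀ curl(a n × ζ). -/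
theorem surface_divergence_lemma (d : (Fin 3 → ℝ) → ℝ) (hd : ContDiff ℝ 2 d)
    (a : (Fin 3 → ℝ) → ℝ) (ha : ContDiff ℝ 1 a)
    (ζ n : (Fin 3 → ℝ) → (Fin 3 → ℝ)) (hζ : ContDiff ℝ 1 ζ)
    (hngrad : n = grad3 d) (hn : ContDiff ℝ 1 n)
    (x : Fin 3 → ℝ) (U : Set (Fin 3 → ℝ)) (hU : IsOpen U) (hxU : x ∈ U)
    (hunit : ∀ y ∈ U, ∑ i, (n y i) ^ 2 = 1)
    (Rm : ℝ) (hRm : Rm ≠ 0) (hdiv : div3 n x = -2 / Rm) :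
    a x * div3 ζ x =
      a x * ∑ i, n x i * (jac ζ x).mulVec (n x) i
        - (2 * a x / Rm) * ∑ i, n x i * ζ x i
        - ∑ i, gradTg a n x i * ζ x i
        + ∑ i, n x i * curl3 (fun y => crossProduct (a y • n y) (ζ y)) x i :=
  surface_divergence_lemma_general a ha ζ n hζ hn x U hU hxU hunit Rm hdiv
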